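/- arXiv:2407.05790 — 3 statements merged into one kernel-verified Lean document; each statement's English description precedes it below -/
import Mathlib

section
/- Suppose U : ℝ^{d_θ} × ℝ^{d_x} → ℝ is measurable, the function (θ,x) ↦ U(θ,x) − (μ/2)(‖θ‖² + ‖x‖²) is convex on ℝ^{d_θ+d_x} for some μ > 0, and 0 < ∫_{ℝ^{d_x}} e^{−U(θ,x)} dx < ∞ for every θ ∈ ℝ^{d_θ}. Then the negative marginal log-likelihood κ(θ) := −log ∫_{ℝ^{d_x}} e^{−U(θ,x)} dx is μ-strongly convex, i.e. θ ↦ κ(θ) − (μ/2)‖θ‖² is convex on ℝ^{d_θ}. Equivalently, the marginal likelihood θ ↦ p_θ(y) := ∫_{ℝ^{d_x}} e^{−U(θ,x)} dx is μ-strongly log-concave. -/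
/-!
Prékopa–Leindler: if `f x ^ a * g y ^ b ≤ h (a • x + b • y)` for all `x, y`, then
`(∫ f) ^ a * (∫ g) ^ b ≤ ∫ h`. On `ℝ`, after truncating and normalising `sup f = sup g = 1`,
this follows by integrating the one-dimensional Brunn–Minkowski inequality
`a |{f > s}| + b |{g > s}| ≤ |{h > s}|` over `s ∈ (0, 1)` and using AM–GM; it passes to `ℝⁿ` by
Fubini.

Since `U(θ, x) - μ/2 ‖θ‖² = (U(θ, x) - μ/2 (‖θ‖² + ‖x‖²)) + μ/2 ‖x‖²` is jointly convex, the
functions `x ↦ exp (μ/2 ‖θ‖² - U(θ, x))` at `θ₁`, `θ₂` and `a • θ₁ + b • θ₂` satisfy the hypothesis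
of Prékopa–Leindler, so `θ ↦ exp (μ/2 ‖θ‖²) ∫ exp (-U(θ, x)) dx` is log-concave.
-/

open MeasureTheory Real Set
open scoped ENNReal Pointwise

namespace ENNReal

theorem geom_mean_le_arith_mean2_weighted {w₁ w₂ : ℝ} (hw₁ : 0 < w₁) (hw₂ : 0 < w₂)
    (hw : w₁ + w₂ = 1) (p₁ p₂ : ℝ≥0∞) :
    p₁ ^ w₁ * p₂ ^ w₂ ≤ ENNReal.ofReal w₁ * p₁ + ENNReal.ofReal w₂ * p₂ := by
  rcases eq_or_ne p₁ ∞ with rfl | hp₁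
  · simp [mul_top, hw₁]
  rcases eq_or_ne p₂ ∞ with rfl | hp₂
  · simp [mul_top, hw₂]
  rw [← ofReal_toReal hp₁, ← ofReal_toReal hp₂, ofReal_rpow_of_nonneg toReal_nonneg hw₁.le,
    ofReal_rpow_of_nonneg toReal_nonneg hw₂.le, ← ofReal_mul (by positivity),
    ← ofReal_mul hw₁.le, ← ofReal_mul hw₂.le, ← ofReal_add (by positivity) (by positivity)]
  exact ofReal_le_ofReal
    (Real.geom_mean_le_arith_mean2_weighted hw₁.le hw₂.le toReal_nonneg toReal_nonneg hw)

theorem iSup_rpow {ι : Sort*} {y : ℝ} (hy : 0 < y) (u : ι → ℝ≥0∞) :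
    (⨆ i, u i) ^ y = ⨆ i, u i ^ y :=
  (orderIsoRpow y hy).map_iSup u

theorem iSup_mul_iSup_of_monotone {ι : Type*} [Preorder ι] [IsDirectedOrder ι]
    {u v : ι → ℝ≥0∞} (hu : Monotone u) (hv : Monotone v) :
    (⨆ i, u i) * ⨆ i, v i = ⨆ i, u i * v i := by
  refine le_antisymm ?_ iSup_mul_le
  simp_rw [iSup_mul, mul_iSup]
  refine iSup₂_le fun i j => ?_
  obtain ⟨k, hik, hjk⟩ := exists_ge_ge i j
  exact le_iSup_of_le k (mul_le_mul' (hu hik) (hv hjk))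

end ENNReal

theorem Real.volume_add_volume_le_volume_add_of_isCompact {K L : Set ℝ} (hK : IsCompact K)
    (hL : IsCompact L) (hK₀ : K.Nonempty) (hL₀ : L.Nonempty) :
    volume K + volume L ≤ volume (K + L) := by
  set a := sSup K
  set b := sInf L
  have haK : a ∈ K := hK.sSup_mem hK₀
  have hbL : b ∈ L := hL.sInf_mem hL₀
  -- `K + b` lies to the left of `a + b` and `a + L` to its right
  have hinter : (K + {b}) ∩ ({a} + L) ⊆ {a + b} := by
    rintro _ ⟨⟨k, hk, _, rfl, rfl⟩, ⟨_, rfl, l, hl, hkl⟩⟩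
    have := le_csSup hK.bddAbove hk
    have := csInf_le hL.bddBelow hl
    rw [mem_singleton_iff]
    linarith
  calc volume K + volume L = volume (K + {b}) + volume ({a} + L) := by
        simp only [add_singleton, singleton_add, image_add_right, image_add_left,
          measure_preimage_add_right, measure_preimage_add]
    _ = volume ((K + {b}) ∪ ({a} + L)) + volume ((K + {b}) ∩ ({a} + L)) :=
        (measure_union_add_inter _ (isCompact_singleton.add hL).measurableSet).symm
    _ ≤ volume (K + L) + 0 := by
        gcongr
        · exact union_subset (add_subset_add_left (singleton_subset_iff.2 hbL))
            (add_subset_add_right (singleton_subset_iff.2 haK))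
        · exact (measure_mono hinter).trans (measure_singleton _).le
    _ = volume (K + L) := add_zero _

theorem Real.volume_add_volume_le_volume_add {A B : Set ℝ} (hA : MeasurableSet A)
    (hB : MeasurableSet B) (hA₀ : A.Nonempty) (hB₀ : B.Nonempty) :
    volume A + volume B ≤ volume (A + B) := by
  obtain ⟨a, ha⟩ := hA₀
  obtain ⟨b, hb⟩ := hB₀
  rw [hA.measure_eq_iSup_isCompact, hB.measure_eq_iSup_isCompact]
  simp only [iSup_and']
  refine ENNReal.biSup_add_biSup_le' ⟨∅, empty_subset _, isCompact_empty⟩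
    ⟨∅, empty_subset _, isCompact_empty⟩ fun K ⟨hKA, hK⟩ L ⟨hLB, hL⟩ => ?_
  -- inserting a point makes the compact approximations nonempty
  calc volume K + volume L ≤ volume (insert a K) + volume (insert b L) := by
        gcongr <;> apply subset_insert
    _ ≤ volume (insert a K + insert b L) :=
        volume_add_volume_le_volume_add_of_isCompact (hK.insert a) (hL.insert b)
          (insert_nonempty _ _) (insert_nonempty _ _)
    _ ≤ volume (A + B) :=
        measure_mono (add_subset_add (insert_subset ha hKA) (insert_subset hb hLB))

theorem MeasureTheory.lintegral_eq_setLIntegral_Ioo_measure_lt {α : Type*} [MeasurableSpace α]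
    {μ : Measure α} {φ : α → ℝ≥0∞} (hφ : Measurable φ) (hφ₁ : ∀ x, φ x ≤ 1) :
    ∫⁻ x, φ x ∂μ = ∫⁻ r in Ioo 0 1, μ {x | ENNReal.ofReal r < φ x} := by
  have hφ_ne_top : ∀ x, φ x ≠ ∞ := fun x => ne_top_of_le_ne_top ENNReal.one_ne_top (hφ₁ x)
  have hlevel_empty : ∀ r ∈ Ici (1 : ℝ), μ {x | r < (φ x).toReal} = 0 := fun r hr => by
    convert measure_empty (μ := μ)
    refine eq_empty_of_forall_notMem fun x hx => (lt_irrefl r) (hx.trans_le (le_trans ?_ hr))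
    simpa using ENNReal.toReal_mono ENNReal.one_ne_top (hφ₁ x)
  calc ∫⁻ x, φ x ∂μ = ∫⁻ x, ENNReal.ofReal (φ x).toReal ∂μ := by
        simp_rw [ENNReal.ofReal_toReal (hφ_ne_top _)]
    _ = ∫⁻ r in Ioi 0, μ {x | r < (φ x).toReal} :=
        lintegral_eq_lintegral_meas_lt μ (ae_of_all _ fun _ => ENNReal.toReal_nonneg)
          hφ.ennreal_toReal.aemeasurable
    _ = ∫⁻ r in Ioo 0 1, μ {x | r < (φ x).toReal} := by
        rw [← Ioo_union_Ici_eq_Ioi zero_lt_one,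
          lintegral_union measurableSet_Ici
            ((Iio_disjoint_Ici le_rfl).mono_left Ioo_subset_Iio_self),
          setLIntegral_congr_fun measurableSet_Ici hlevel_empty, lintegral_zero, add_zero]
    _ = ∫⁻ r in Ioo 0 1, μ {x | ENNReal.ofReal r < φ x} :=
        setLIntegral_congr_fun measurableSet_Ioo fun r hr => by
          simp_rw [ENNReal.ofReal_lt_iff_lt_toReal hr.1.le (hφ_ne_top _)]

theorem Real.weighted_volume_superlevel_le {f g h : ℝ → ℝ≥0∞} (hf : Measurable f)
    (hg : Measurable g) (hf_sup : ⨆ x, f x = 1) (hg_sup : ⨆ x, g x = 1) {a b : ℝ} (ha : 0 < a)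
    (hb : 0 < b) (hab : a + b = 1) (hfgh : ∀ x y, f x ^ a * g y ^ b ≤ h (a • x + b • y))
    {s : ℝ≥0∞} (hs : s < 1) :
    ENNReal.ofReal a * volume {x | s < f x} + ENNReal.ofReal b * volume {x | s < g x} ≤
      volume {x | s < h x} := by
  have hf_level : {x | s < f x}.Nonempty := lt_iSup_iff.1 (hf_sup.symm ▸ hs : s < ⨆ x, f x)
  have hg_level : {x | s < g x}.Nonempty := lt_iSup_iff.1 (hg_sup.symm ▸ hs : s < ⨆ x, g x)
  have hsum : a • {x | s < f x} + b • {x | s < g x} ⊆ {x | s < h x} := by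
    rintro _ ⟨_, ⟨x, hx, rfl⟩, _, ⟨y, hy, rfl⟩, rfl⟩
    calc s = s ^ a * s ^ b := by
          rw [← ENNReal.rpow_add_of_nonneg _ _ ha.le hb.le, hab, ENNReal.rpow_one]
      _ < f x ^ a * g y ^ b :=
          ENNReal.mul_lt_mul (ENNReal.rpow_lt_rpow hx ha) (ENNReal.rpow_lt_rpow hy hb)
      _ ≤ h (a • x + b • y) := hfgh x y
  calc ENNReal.ofReal a * volume {x | s < f x} + ENNReal.ofReal b * volume {x | s < g x}
      = volume (a • {x | s < f x}) + volume (b • {x | s < g x}) := by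
        simp only [Measure.addHaar_smul, Module.finrank_self, pow_one, abs_of_pos ha,
          abs_of_pos hb]
    _ ≤ volume (a • {x | s < f x} + b • {x | s < g x}) :=
        volume_add_volume_le_volume_add ((hf measurableSet_Ioi).const_smul₀ a)
          ((hg measurableSet_Ioi).const_smul₀ b) (hf_level.smul_set) (hg_level.smul_set)
    _ ≤ volume {x | s < h x} := measure_mono hsum

theorem Real.add_lintegral_le_lintegral_of_iSup_eq_one {f g h : ℝ → ℝ≥0∞} (hf : Measurable f)
    (hg : Measurable g) (hh : Measurable h) (hf_sup : ⨆ x, f x = 1) (hg_sup : ⨆ x, g x = 1)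
    {a b : ℝ} (ha : 0 < a) (hb : 0 < b) (hab : a + b = 1)
    (hfgh : ∀ x y, f x ^ a * g y ^ b ≤ h (a • x + b • y)) :
    ENNReal.ofReal a * (∫⁻ x, f x) + ENNReal.ofReal b * (∫⁻ x, g x) ≤ ∫⁻ x, h x := by
  have measurable_volume_superlevel (φ : ℝ → ℝ≥0∞) :
      Measurable fun r : ℝ => volume {x | ENNReal.ofReal r < φ x} :=
    Antitone.measurable fun r s hrs =>
      measure_mono fun x hx => (ENNReal.ofReal_le_ofReal hrs).trans_lt hx
  have hh_layercake : ∫⁻ r in Ioo 0 1, volume {x | ENNReal.ofReal r < h x} ≤ ∫⁻ x, h x :=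
    calc ∫⁻ r in Ioo 0 1, volume {x | ENNReal.ofReal r < h x}
        = ∫⁻ r in Ioo 0 1, volume {x | ENNReal.ofReal r < min (h x) 1} :=
          setLIntegral_congr_fun measurableSet_Ioo fun r hr => by
            simp_rw [lt_min_iff, ENNReal.ofReal_lt_one.2 hr.2, and_true]
      _ = ∫⁻ x, min (h x) 1 := (lintegral_eq_setLIntegral_Ioo_measure_lt
          (hh.min measurable_const) fun _ => min_le_right _ _).symm
      _ ≤ ∫⁻ x, h x := lintegral_mono fun _ => min_le_left _ _
  rw [lintegral_eq_setLIntegral_Ioo_measure_lt hf (hf_sup ▸ le_iSup f),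
    lintegral_eq_setLIntegral_Ioo_measure_lt hg (hg_sup ▸ le_iSup g),
    ← lintegral_const_mul _ (measurable_volume_superlevel f),
    ← lintegral_const_mul _ (measurable_volume_superlevel g),
    ← lintegral_add_left ((measurable_volume_superlevel f).const_mul _)]
  refine le_trans (setLIntegral_mono (measurable_volume_superlevel h) fun r hr => ?_)
    hh_layercake
  exact weighted_volume_superlevel_le hf hg hf_sup hg_sup ha hb hab hfgh
    (ENNReal.ofReal_lt_one.2 hr.2)

theorem Real.lintegral_rpow_mul_lintegral_rpow_le_of_iSup_ne_top {f g h : ℝ → ℝ≥0∞}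
    (hf : Measurable f) (hg : Measurable g) (hh : Measurable h) (hf_sup : ⨆ x, f x ≠ ∞)
    (hg_sup : ⨆ x, g x ≠ ∞) {a b : ℝ} (ha : 0 < a) (hb : 0 < b) (hab : a + b = 1)
    (hfgh : ∀ x y, f x ^ a * g y ^ b ≤ h (a • x + b • y)) :
    (∫⁻ x, f x) ^ a * (∫⁻ x, g x) ^ b ≤ ∫⁻ x, h x := by
  set A := ⨆ x, f x
  set B := ⨆ x, g x
  rcases eq_or_ne A 0 with hA | hA
  · simp [ENNReal.iSup_eq_zero.1 hA, ENNReal.zero_rpow_of_pos ha]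
  rcases eq_or_ne B 0 with hB | hB
  · simp [ENNReal.iSup_eq_zero.1 hB, ENNReal.zero_rpow_of_pos hb]
  -- the hypothesis is invariant under `f ↦ A⁻¹ f`, `g ↦ B⁻¹ g`, `h ↦ A⁻ᵃ B⁻ᵇ h`
  set c := A⁻¹ ^ a * B⁻¹ ^ b
  have hc : c ≠ 0 := mul_ne_zero
    (ENNReal.rpow_pos (ENNReal.inv_pos.2 hf_sup) (ENNReal.inv_ne_top.2 hA)).ne'
    (ENNReal.rpow_pos (ENNReal.inv_pos.2 hg_sup) (ENNReal.inv_ne_top.2 hB)).ne'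
  have hc_top : c ≠ ∞ := by
    simp only [c]; finiteness
  have key := add_lintegral_le_lintegral_of_iSup_eq_one (f := fun x => A⁻¹ * f x)
    (g := fun x => B⁻¹ * g x) (h := fun x => c * h x) (hf.const_mul _) (hg.const_mul _)
    (hh.const_mul _) (by rw [← ENNReal.mul_iSup, ENNReal.inv_mul_cancel hA hf_sup])
    (by rw [← ENNReal.mul_iSup, ENNReal.inv_mul_cancel hB hg_sup]) ha hb hab fun x y =>
      calc (A⁻¹ * f x) ^ a * (B⁻¹ * g y) ^ b = c * (f x ^ a * g y ^ b) := by
            rw [ENNReal.mul_rpow_of_nonneg _ _ ha.le, ENNReal.mul_rpow_of_nonneg _ _ hb.le]; ring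
        _ ≤ c * h (a • x + b • y) := by gcongr; exact hfgh x y
  rw [lintegral_const_mul _ hf, lintegral_const_mul _ hg, lintegral_const_mul _ hh] at key
  refine (ENNReal.mul_le_mul_iff_right hc hc_top).1 ?_
  calc c * ((∫⁻ x, f x) ^ a * (∫⁻ x, g x) ^ b)
      = (A⁻¹ * ∫⁻ x, f x) ^ a * (B⁻¹ * ∫⁻ x, g x) ^ b := by
        rw [ENNReal.mul_rpow_of_nonneg _ _ ha.le, ENNReal.mul_rpow_of_nonneg _ _ hb.le]; ring
    _ ≤ ENNReal.ofReal a * (A⁻¹ * ∫⁻ x, f x) + ENNReal.ofReal b * (B⁻¹ * ∫⁻ x, g x) :=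
        ENNReal.geom_mean_le_arith_mean2_weighted ha hb hab _ _
    _ ≤ c * ∫⁻ x, h x := key

namespace MeasureTheory

def PrekopaLeindler {E : Type*} [AddCommGroup E] [Module ℝ E] [MeasurableSpace E]
    (μ : Measure E) : Prop :=
  ∀ ⦃f g h : E → ℝ≥0∞⦄, Measurable f → Measurable g → Measurable h →
    ∀ ⦃a b : ℝ⦄, 0 < a → 0 < b → a + b = 1 →
      (∀ x y, f x ^ a * g y ^ b ≤ h (a • x + b • y)) →
      (∫⁻ x, f x ∂μ) ^ a * (∫⁻ x, g x ∂μ) ^ b ≤ ∫⁻ x, h x ∂μ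

end MeasureTheory

theorem Real.prekopaLeindler_volume : PrekopaLeindler (volume : Measure ℝ) := by
  intro f g h hf hg hh a b ha hb hab hfgh
  have htrunc (n : ℕ) : (∫⁻ x, min (f x) n) ^ a * (∫⁻ x, min (g x) n) ^ b ≤ ∫⁻ x, h x :=
    lintegral_rpow_mul_lintegral_rpow_le_of_iSup_ne_top (hf.min measurable_const)
      (hg.min measurable_const) hh
      (ne_top_of_le_ne_top (ENNReal.natCast_ne_top n) (iSup_le fun _ => min_le_right _ _))
      (ne_top_of_le_ne_top (ENNReal.natCast_ne_top n) (iSup_le fun _ => min_le_right _ _))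
      ha hb hab fun x y => le_trans (by gcongr <;> apply min_le_left) (hfgh x y)
  have hlim {φ : ℝ → ℝ≥0∞} (hφ : Measurable φ) :
      ∫⁻ x, φ x = ⨆ n : ℕ, ∫⁻ x, min (φ x) n := by
    rw [← lintegral_iSup (fun n => hφ.min measurable_const) fun m n hmn x => by gcongr]
    congr with x
    rw [← inf_iSup_eq, ENNReal.iSup_natCast, inf_top_eq]
  rw [hlim hf, hlim hg, ENNReal.iSup_rpow ha, ENNReal.iSup_rpow hb,
    ENNReal.iSup_mul_iSup_of_monotone]
  · exact iSup_le htrunc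
  all_goals exact fun m n hmn => by gcongr

namespace MeasureTheory.PrekopaLeindler

variable {E F : Type*} [AddCommGroup E] [Module ℝ E] [MeasurableSpace E]
  [AddCommGroup F] [Module ℝ F] [MeasurableSpace F]

theorem dirac_zero : PrekopaLeindler (Measure.dirac (0 : E)) := by
  intro f g h hf hg hh a b _ _ _ hfgh
  simpa [lintegral_dirac' _ hf, lintegral_dirac' _ hg, lintegral_dirac' _ hh] using hfgh 0 0

theorem prod {μ : Measure E} {ν : Measure F} [SFinite ν] (hμ : PrekopaLeindler μ)
    (hν : PrekopaLeindler ν) : PrekopaLeindler (μ.prod ν) := by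
  intro f g h hf hg hh a b ha hb hab hfgh
  rw [lintegral_prod _ hf.aemeasurable, lintegral_prod _ hg.aemeasurable,
    lintegral_prod _ hh.aemeasurable]
  exact hμ hf.lintegral_prod_right' hg.lintegral_prod_right' hh.lintegral_prod_right' ha hb hab
    fun x y => hν (hf.comp measurable_prodMk_left) (hg.comp measurable_prodMk_left)
      (hh.comp measurable_prodMk_left) ha hb hab fun u v => hfgh (x, u) (y, v)

theorem of_measurePreserving {μ : Measure E} {ν : Measure F} (hμ : PrekopaLeindler μ)
    (e : E →ₗ[ℝ] F) (he : MeasurePreserving e μ ν) : PrekopaLeindler ν := by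
  intro f g h hf hg hh a b ha hb hab hfgh
  rw [← he.lintegral_comp hf, ← he.lintegral_comp hg, ← he.lintegral_comp hh]
  refine hμ (hf.comp he.measurable) (hg.comp he.measurable) (hh.comp he.measurable) ha hb hab
    fun x y => ?_
  simpa only [Function.comp, map_add, map_smul] using hfgh (e x) (e y)

end MeasureTheory.PrekopaLeindler

theorem prekopaLeindler_volume_pi (n : ℕ) : PrekopaLeindler (volume : Measure (Fin n → ℝ)) := by
  induction n with
  | zero =>
    rw [Measure.volume_pi_eq_dirac 0]
    exact PrekopaLeindler.dirac_zero
  | succ n ih =>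
    refine (Real.prekopaLeindler_volume.prod ih).of_measurePreserving
      (Fin.consLinearEquiv ℝ fun _ => ℝ).toLinearMap ?_
    have hcons : ⇑(Fin.consLinearEquiv ℝ fun _ : Fin (n + 1) => ℝ) =
        (MeasurableEquiv.piFinSuccAbove (fun _ : Fin (n + 1) => ℝ) 0).symm := by
      funext p
      ext i
      cases i using Fin.cases <;> simp
    rw [LinearEquiv.coe_coe, hcons]
    exact (volume_preserving_piFinSuccAbove (fun _ : Fin (n + 1) => ℝ) 0).symm

theorem EuclideanSpace.prekopaLeindler_volume (n : ℕ) :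
    PrekopaLeindler (volume : Measure (EuclideanSpace ℝ (Fin n))) :=
  (prekopaLeindler_volume_pi n).of_measurePreserving
    (WithLp.linearEquiv 2 ℝ (Fin n → ℝ)).symm.toLinearMap (PiLp.volume_preserving_toLp (Fin n))

theorem MeasureTheory.PrekopaLeindler.convexOn_neg_log_integral_exp_neg {E F : Type*}
    [AddCommGroup E] [Module ℝ E] [AddCommGroup F] [Module ℝ F] [MeasurableSpace F]
    {ν : Measure F} (hν : PrekopaLeindler ν) {W : E → F → ℝ}
    (hW : ConvexOn ℝ univ fun p : E × F => W p.1 p.2) (hW_meas : ∀ θ, Measurable (W θ))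
    (hint : ∀ θ, Integrable (fun x => exp (-W θ x)) ν) (hpos : ∀ θ, 0 < ∫ x, exp (-W θ x) ∂ν) :
    ConvexOn ℝ univ fun θ => -log (∫ x, exp (-W θ x) ∂ν) := by
  refine convexOn_iff_forall_pos.2 ⟨convex_univ, fun θ₁ _ θ₂ _ a b ha hb hab => ?_⟩
  set Z : E → ℝ := fun θ => ∫ x, exp (-W θ x) ∂ν
  have hlintegral (θ : E) : ∫⁻ x, ENNReal.ofReal (exp (-W θ x)) ∂ν = ENNReal.ofReal (Z θ) :=
    (ofReal_integral_eq_lintegral_ofReal (hint θ) (ae_of_all _ fun _ => (exp_pos _).le)).symm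
  have hrpow (u w : ℝ) (hw : 0 ≤ w) :
      ENNReal.ofReal (exp u) ^ w = ENNReal.ofReal (exp (w * u)) := by
    rw [ENNReal.ofReal_rpow_of_nonneg (exp_pos _).le hw, ← exp_mul, mul_comm]
  have hZ : Z θ₁ ^ a * Z θ₂ ^ b ≤ Z (a • θ₁ + b • θ₂) := by
    have hPL := hν (hW_meas θ₁).neg.exp.ennreal_ofReal (hW_meas θ₂).neg.exp.ennreal_ofReal
      (hW_meas (a • θ₁ + b • θ₂)).neg.exp.ennreal_ofReal ha hb hab fun x y => by
        rw [hrpow _ _ ha.le, hrpow _ _ hb.le, ← ENNReal.ofReal_mul (exp_pos _).le, ← exp_add]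
        refine ENNReal.ofReal_le_ofReal (exp_le_exp.2 ?_)
        have := hW.2 (mem_univ (θ₁, x)) (mem_univ (θ₂, y)) ha.le hb.le hab
        simp only [smul_eq_mul, Prod.smul_mk, Prod.mk_add_mk, Pi.neg_apply] at this ⊢
        linarith
    simp only [Pi.neg_apply] at hPL
    rwa [hlintegral, hlintegral, hlintegral, ENNReal.ofReal_rpow_of_nonneg (hpos _).le ha.le,
      ENNReal.ofReal_rpow_of_nonneg (hpos _).le hb.le, ← ENNReal.ofReal_mul (by positivity),
      ENNReal.ofReal_le_ofReal_iff (hpos _).le] at hPL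
  have hZ₁ := hpos θ₁
  have hZ₂ := hpos θ₂
  have hlog := log_le_log (by positivity) hZ
  rw [log_mul (by positivity) (by positivity), log_rpow hZ₁, log_rpow hZ₂] at hlog
  simp only [smul_eq_mul]
  linarith

/-- **Strong log-concavity of the marginal likelihood.**
If `U : ℝ^{dθ} × ℝ^{dx} → ℝ` is measurable, `(θ, x) ↦ U θ x - (μ/2)(‖θ‖² + ‖x‖²)` is convex
for some `μ > 0`, and `0 < ∫ exp (-U θ x) dx < ∞` for every `θ`, then the negative marginal
log-likelihood `κ θ = -log ∫ exp (-U θ x) dx` is `μ`-strongly convex, i.e.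
`θ ↦ κ θ - (μ/2)‖θ‖²` is convex. -/
theorem marginal_loglik_strongly_convex {dθ dx : ℕ} (μ : ℝ) (hμ : 0 < μ)
    (U : EuclideanSpace ℝ (Fin dθ) → EuclideanSpace ℝ (Fin dx) → ℝ)
    (hUmeas : Measurable (Function.uncurry U))
    (hUconv : ConvexOn ℝ Set.univ
      (fun p : EuclideanSpace ℝ (Fin dθ) × EuclideanSpace ℝ (Fin dx) =>
        U p.1 p.2 - μ / 2 * (‖p.1‖ ^ 2 + ‖p.2‖ ^ 2)))
    (hint : ∀ θ, Integrable (fun x => Real.exp (-U θ x)))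
    (hpos : ∀ θ, 0 < ∫ x, Real.exp (-U θ x)) :
    ConvexOn ℝ Set.univ
      (fun θ : EuclideanSpace ℝ (Fin dθ) =>
        (-Real.log (∫ x, Real.exp (-U θ x))) - μ / 2 * ‖θ‖ ^ 2) := by
  have hW_conv :
      ConvexOn ℝ univ fun p : EuclideanSpace ℝ (Fin dθ) × EuclideanSpace ℝ (Fin dx) =>
        U p.1 p.2 - μ / 2 * ‖p.1‖ ^ 2 := by
    have hsq : ConvexOn ℝ univ fun p : EuclideanSpace ℝ (Fin dθ) × EuclideanSpace ℝ (Fin dx) =>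
        μ / 2 * ‖p.2‖ ^ 2 :=
      ((convexOn_univ_norm.pow (fun _ _ => norm_nonneg _) 2).comp_linearMap
        (LinearMap.snd ℝ _ _)).smul (by positivity)
    refine (hUconv.add hsq).congr fun p _ => ?_
    simp only [Pi.add_apply]
    ring
  have hW_exp (θ) : (fun x => exp (-(U θ x - μ / 2 * ‖θ‖ ^ 2))) =
      fun x => exp (μ / 2 * ‖θ‖ ^ 2) * exp (-U θ x) := by
    ext x
    rw [← exp_add]
    congr 1
    ring
  refine ((EuclideanSpace.prekopaLeindler_volume dx).convexOn_neg_log_integral_exp_neg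
    (W := fun θ x => U θ x - μ / 2 * ‖θ‖ ^ 2) hW_conv
    (fun θ => (hUmeas.comp measurable_prodMk_left).sub_const _)
    (fun θ => hW_exp θ ▸ (hint θ).const_mul _)
    (fun θ => by rw [hW_exp, integral_const_mul]; exact mul_pos (exp_pos _) (hpos θ))).congr
    fun θ _ => ?_
  dsimp only
  rw [hW_exp, integral_const_mul, log_mul (exp_pos _).ne' (hpos θ).ne', log_exp]
  ring
end

section
/- Let U : ℝ^{d_θ} × ℝ^{d_x} → ℝ be measurable with 0 < p_θ(y) := ∫_{ℝ^{d_x}} e^{−U(θ,x)} dx < ∞ for every θ, let N ∈ ℕ, and suppose Z := ∫_{ℝ^{d_θ}} p_θ(y)^N dθ ∈ (0,∞). Let π̄^N be the probability measure on ℝ^{d_θ} × (ℝ^{d_x})^N with density proportional to (θ, z_1,…,z_N) ↦ exp(−Σ_{i=1}^N U(θ, √N z_i)). Then the pushforward of π̄^N under the projection (θ, z_1,…,z_N) ↦ θ is the probability measure on ℝ^{d_θ} with density θ ↦ p_θ(y)^N / Z; that is, the θ-marginal of π̄^N has density proportional to exp(−N κ(θ)) where κ(θ) = −log p_θ(y).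 -/
open MeasureTheory Real
open scoped ENNReal

/-
The density of `π̄^N` factorises over the particles: for fixed `θ` it is `∏ᵢ exp (-U(θ, √N zᵢ))`.
By Fubini on `(ℝ^{dx})^N` and the change of variables `x = √N z`, its integral over `z` is
`c · p_θ(y)^N` with `c = N^{-N dx / 2}` independent of `θ`. Tonelli then identifies the
`θ`-marginal with `c · p_θ(y)^N dθ` and the total mass with `c · Z`, and `c` cancels on
normalising.
-/

section Marginal

variable {α β : Type*} [MeasurableSpace α] [MeasurableSpace β] {μ : Measure α} {ν : Measure β}
  [SFinite ν] {ρ : α × β → ℝ≥0∞} {g : α → ℝ≥0∞} {c : ℝ≥0∞}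

theorem Measure.map_fst_withDensity_prod [SFinite μ] (hρ : Measurable ρ) :
    ((μ.prod ν).withDensity ρ).map Prod.fst = μ.withDensity fun a => ∫⁻ b, ρ (a, b) ∂ν := by
  ext s hs
  have hpre : Prod.fst ⁻¹' s = s ×ˢ (Set.univ : Set β) := by ext; simp
  rw [Measure.map_apply measurable_fst hs, withDensity_apply _ (measurable_fst hs),
    withDensity_apply _ hs, hpre, ← Measure.restrict_prod_eq_prod_univ,
    lintegral_prod _ hρ.aemeasurable]

theorem lintegral_prod_of_lintegral_right_eq (hρ : Measurable ρ) (hc : c ≠ ∞)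
    (hfib : ∀ a, ∫⁻ b, ρ (a, b) ∂ν = c * g a) :
    ∫⁻ w, ρ w ∂μ.prod ν = c * ∫⁻ a, g a ∂μ := by
  simp_rw [lintegral_prod _ hρ.aemeasurable, hfib]
  exact lintegral_const_mul' _ _ hc

theorem Measure.map_fst_normalize_withDensity_prod [SFinite μ] (hρ : Measurable ρ) (hc₀ : c ≠ 0)
    (hc : c ≠ ∞) (hfib : ∀ a, ∫⁻ b, ρ (a, b) ∂ν = c * g a) :
    ((∫⁻ w, ρ w ∂μ.prod ν)⁻¹ • (μ.prod ν).withDensity ρ).map Prod.fst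
      = (∫⁻ a, g a ∂μ)⁻¹ • μ.withDensity g := by
  have hdens : (fun a => ∫⁻ b, ρ (a, b) ∂ν) = c • g := funext hfib
  rw [Measure.map_smul, Measure.map_fst_withDensity_prod hρ, hdens, withDensity_smul' _ _ hc,
    smul_smul, lintegral_prod_of_lintegral_right_eq hρ hc hfib,
    ENNReal.mul_inv (Or.inl hc₀) (Or.inl hc), mul_right_comm, ENNReal.inv_mul_cancel hc₀ hc,
    one_mul]

end Marginal

section Particles

variable {E : Type*} [NormedAddCommGroup E] [NormedSpace ℝ E] [FiniteDimensional ℝ E]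
  [MeasurableSpace E] [BorelSpace E] (μ : Measure E) [μ.IsAddHaarMeasure]

theorem Real.exp_neg_sum {ι : Type*} (s : Finset ι) (a : ι → ℝ) :
    exp (-∑ i ∈ s, a i) = ∏ i ∈ s, exp (-a i) := by
  rw [← Finset.sum_neg_distrib, Real.exp_sum]

theorem integral_exp_neg_sum_comp_smul {ι : Type*} [Fintype ι] (f : E → ℝ) (r : ℝ) :
    ∫ z : ι → E, exp (-∑ i, f (r • z i)) ∂(Measure.pi fun _ => μ)
      = (|(r ^ Module.finrank ℝ E)⁻¹| * ∫ x, exp (-f x) ∂μ) ^ Fintype.card ι := by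
  simp_rw [Real.exp_neg_sum]
  rw [integral_fintype_prod_eq_pow fun x => exp (-f (r • x)),
    Measure.integral_comp_smul μ (fun x => exp (-f x)), smul_eq_mul]

theorem integrable_exp_neg_sum_comp_sqrt_smul {f : E → ℝ}
    (hf : Integrable (fun x => exp (-f x)) μ) (N : ℕ) :
    Integrable (fun z : Fin N → E => exp (-∑ i, f (√N • z i))) (Measure.pi fun _ => μ) := by
  simp_rw [Real.exp_neg_sum]
  exact Integrable.fintype_prod fun i =>
    hf.comp_smul (Real.sqrt_ne_zero'.2 (Nat.cast_pos.2 i.pos))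

theorem lintegral_exp_neg_sum_comp_sqrt_smul {f : E → ℝ}
    (hf : Integrable (fun x => exp (-f x)) μ) (N : ℕ) :
    ∫⁻ z : Fin N → E, ENNReal.ofReal (exp (-∑ i, f (√N • z i))) ∂(Measure.pi fun _ => μ)
      = ENNReal.ofReal (|((√N : ℝ) ^ Module.finrank ℝ E)⁻¹| ^ N)
        * ENNReal.ofReal ((∫ x, exp (-f x) ∂μ) ^ N) := by
  rw [← ofReal_integral_eq_lintegral_ofReal (integrable_exp_neg_sum_comp_sqrt_smul μ hf N)
      (.of_forall fun _ => (exp_pos _).le), integral_exp_neg_sum_comp_smul, Fintype.card_fin,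
    mul_pow, ENNReal.ofReal_mul (by positivity)]

end Particles

theorem kipld_theta_marginal_general {dθ dx : ℕ} (N : ℕ)
    (U : EuclideanSpace ℝ (Fin dθ) → EuclideanSpace ℝ (Fin dx) → ℝ)
    (hUmeas : Measurable (Function.uncurry U))
    (hint : ∀ θ, Integrable (fun x => Real.exp (-U θ x)))
    (hZint : Integrable (fun θ => (∫ x, Real.exp (-U θ x)) ^ N)) :
    Measure.map Prod.fst
      ((ENNReal.ofReal
          (∫ w : EuclideanSpace ℝ (Fin dθ) × (Fin N → EuclideanSpace ℝ (Fin dx)),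
            Real.exp (-(∑ i, U w.1 (Real.sqrt N • w.2 i)))))⁻¹ •
        volume.withDensity fun w : EuclideanSpace ℝ (Fin dθ) × (Fin N → EuclideanSpace ℝ (Fin dx)) =>
          ENNReal.ofReal (Real.exp (-(∑ i, U w.1 (Real.sqrt N • w.2 i)))))
    = (ENNReal.ofReal (∫ θ, (∫ x, Real.exp (-U θ x)) ^ N))⁻¹ •
        volume.withDensity fun θ : EuclideanSpace ℝ (Fin dθ) =>
          ENNReal.ofReal ((∫ x, Real.exp (-U θ x)) ^ N) := by
  set c : ℝ := |((√N : ℝ) ^ dx)⁻¹| ^ N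
  have hc : 0 < c := by
    rcases N.eq_zero_or_pos with rfl | hN
    · simp [c]
    · exact pow_pos (abs_pos.2 (by positivity)) N
  have hF : Measurable fun w : EuclideanSpace ℝ (Fin dθ) × (Fin N → EuclideanSpace ℝ (Fin dx)) =>
      exp (-∑ i, U w.1 (√N • w.2 i)) :=
    (Finset.measurable_sum _ fun i _ => hUmeas.comp (measurable_fst.prodMk (by fun_prop))).neg.exp
  have hfib (θ) : ∫⁻ z : Fin N → EuclideanSpace ℝ (Fin dx),
      ENNReal.ofReal (exp (-∑ i, U θ (√N • z i)))
        = ENNReal.ofReal c * ENNReal.ofReal ((∫ x, exp (-U θ x)) ^ N) := by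
    rw [volume_pi, lintegral_exp_neg_sum_comp_sqrt_smul _ (hint θ), finrank_euclideanSpace_fin]
  have hZ : ENNReal.ofReal (∫ θ, (∫ x, exp (-U θ x)) ^ N)
      = ∫⁻ θ, ENNReal.ofReal ((∫ x, exp (-U θ x)) ^ N) :=
    ofReal_integral_eq_lintegral_ofReal hZint
      (.of_forall fun θ => pow_nonneg (integral_nonneg fun _ => (exp_pos _).le) N)
  rw [integral_eq_lintegral_of_nonneg_ae (.of_forall fun _ => (exp_pos _).le)
      hF.aestronglyMeasurable, ENNReal.ofReal_toReal, hZ, Measure.volume_eq_prod]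
  · exact Measure.map_fst_normalize_withDensity_prod hF.ennreal_ofReal
      (ENNReal.ofReal_pos.2 hc).ne' ENNReal.ofReal_ne_top hfib
  · rw [Measure.volume_eq_prod, lintegral_prod_of_lintegral_right_eq hF.ennreal_ofReal
      ENNReal.ofReal_ne_top hfib, ← hZ]
    exact ENNReal.mul_ne_top ENNReal.ofReal_ne_top ENNReal.ofReal_ne_top

/-- **θ-marginal of the stationary measure of KIPLD (Proposition 4.1).**
Let `π̄^N` be the probability measure on `ℝ^{dθ} × (ℝ^{dx})^N` with density proportional to
`exp (-∑ᵢ U(θ, √N zᵢ))`.  Then its pushforward under the projection onto `θ` is the probability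
measure with density `θ ↦ p_θ(y)^N / Z`, where `p_θ(y) = ∫ exp (-U θ x) dx` and
`Z = ∫ p_θ(y)^N dθ`; i.e. the θ-marginal has density proportional to `exp (-N κ θ)` with
`κ θ = -log p_θ(y)`. -/
theorem kipld_theta_marginal {dθ dx : ℕ} (N : ℕ)
    (U : EuclideanSpace ℝ (Fin dθ) → EuclideanSpace ℝ (Fin dx) → ℝ)
    (hUmeas : Measurable (Function.uncurry U))
    (hint : ∀ θ, Integrable (fun x => Real.exp (-U θ x)))
    (hpos : ∀ θ, 0 < ∫ x, Real.exp (-U θ x))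
    (hZint : Integrable (fun θ => (∫ x, Real.exp (-U θ x)) ^ N))
    (hZpos : 0 < ∫ θ, (∫ x, Real.exp (-U θ x)) ^ N) :
    Measure.map Prod.fst
      ((ENNReal.ofReal
          (∫ w : EuclideanSpace ℝ (Fin dθ) × (Fin N → EuclideanSpace ℝ (Fin dx)),
            Real.exp (-(∑ i, U w.1 (Real.sqrt N • w.2 i)))))⁻¹ •
        volume.withDensity fun w : EuclideanSpace ℝ (Fin dθ) × (Fin N → EuclideanSpace ℝ (Fin dx)) =>
          ENNReal.ofReal (Real.exp (-(∑ i, U w.1 (Real.sqrt N • w.2 i)))))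
    = (ENNReal.ofReal (∫ θ, (∫ x, Real.exp (-U θ x)) ^ N))⁻¹ •
        volume.withDensity fun θ : EuclideanSpace ℝ (Fin dθ) =>
          ENNReal.ofReal ((∫ x, Real.exp (-U θ x)) ^ N) :=
  kipld_theta_marginal_general N U hUmeas hint hZint
end

section
/- Let U : ℝ^{d_θ} × ℝ^{d_x} → ℝ be differentiable with L-Lipschitz gradient: ‖∇U(z) − ∇U(z')‖ ≤ L‖z − z'‖ for all z, z' ∈ ℝ^{d_θ+d_x}, where L > 0. For N ∈ ℕ define barU_N : ℝ^{d_θ} × (ℝ^{d_x})^N → ℝ by barU_N(θ, z_1,…,z_N) = (1/N) Σ_{i=1}^N U(θ, √N z_i). Then barU_N has L-Lipschitz gradient with the same constant independent of N: ‖∇barU_N(w) − ∇barU_N(w')‖ ≤ L‖w − w'‖ for all w, w' ∈ ℝ^{d_θ + N d_x}. -/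
open MeasureTheory Real

/-- `ℝ^{dθ} × ℝ^{dx}` with the Euclidean (`L²`) norm. -/
abbrev JointSpace (dθ dx : ℕ) :=
  WithLp 2 (EuclideanSpace ℝ (Fin dθ) × EuclideanSpace ℝ (Fin dx))

/-- `ℝ^{dθ} × (ℝ^{dx})^N` with the Euclidean (`L²`) norm. -/
abbrev ConfSpace (dθ dx N : ℕ) :=
  WithLp 2 (EuclideanSpace ℝ (Fin dθ) × PiLp 2 (fun _ : Fin N => EuclideanSpace ℝ (Fin dx)))

/-- The rescaled joint potential `barU_N (θ, z₁,…,z_N) = (1/N) ∑ᵢ U (θ, √N zᵢ)`. -/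
noncomputable def barUN {dθ dx : ℕ} (N : ℕ) (U : JointSpace dθ dx → ℝ)
    (w : ConfSpace dθ dx N) : ℝ :=
  (N : ℝ)⁻¹ * ∑ i : Fin N, U (WithLp.toLp 2 ((WithLp.ofLp w).1, Real.sqrt N • (WithLp.ofLp w).2 i))

/-!
With `Tᵢ w = (θ, √N zᵢ)` we have `barU_N = N⁻¹ ∑ᵢ U ∘ Tᵢ`, so the difference of the derivatives
at `w` and `w'`, applied to `v`, is `N⁻¹ ∑ᵢ (DU(Tᵢ w) - DU(Tᵢ w')) (Tᵢ v)`, whose `i`-th term is at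
most `L ‖Tᵢ (w - w')‖ ‖Tᵢ v‖`. Since `∑ᵢ ‖Tᵢ u‖² = N ‖u‖²`, Cauchy–Schwarz bounds the sum by
`L N ‖w - w'‖ ‖v‖`, and the factor `N` cancels the prefactor `N⁻¹`.
-/
theorem norm_gradient_sub_gradient {E : Type*} [NormedAddCommGroup E] [InnerProductSpace ℝ E]
    [CompleteSpace E] (f : E → ℝ) (x y : E) :
    ‖gradient f x - gradient f y‖ = ‖fderiv ℝ f x - fderiv ℝ f y‖ := by
  rw [gradient, gradient, ← map_sub, LinearIsometryEquiv.norm_map]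

section SumComp

variable {ι E F : Type*} [Fintype ι] [NormedAddCommGroup E] [NormedSpace ℝ E]
  [NormedAddCommGroup F] [NormedSpace ℝ F] {f : F → ℝ} (T : ι → E →L[ℝ] F)

theorem hasFDerivAt_sum_comp (hf : Differentiable ℝ f) (w : E) :
    HasFDerivAt (fun w => ∑ i, f (T i w)) (∑ i, (fderiv ℝ f (T i w)).comp (T i)) w :=
  HasFDerivAt.fun_sum fun i _ => (hf (T i w)).hasFDerivAt.comp w (T i).hasFDerivAt

theorem norm_fderiv_sum_comp_sub_le (hf : Differentiable ℝ f) {L K : ℝ} (hL : 0 ≤ L)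
    (hK : 0 ≤ K) (hlip : ∀ z z', ‖fderiv ℝ f z - fderiv ℝ f z'‖ ≤ L * ‖z - z'‖)
    (hT : ∀ v, ∑ i, ‖T i v‖ ^ 2 ≤ K * ‖v‖ ^ 2) (w w' : E) :
    ‖fderiv ℝ (fun w => ∑ i, f (T i w)) w - fderiv ℝ (fun w => ∑ i, f (T i w)) w'‖
      ≤ L * K * ‖w - w'‖ := by
  have hsqrt : ∀ v, √(∑ i, ‖T i v‖ ^ 2) ≤ √K * ‖v‖ := fun v => by
    rw [← Real.sqrt_sq (norm_nonneg v), ← Real.sqrt_mul hK]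
    exact Real.sqrt_le_sqrt (hT v)
  rw [(hasFDerivAt_sum_comp T hf w).fderiv, (hasFDerivAt_sum_comp T hf w').fderiv,
    ← Finset.sum_sub_distrib]
  refine ContinuousLinearMap.opNorm_le_bound _ (by positivity) fun v => ?_
  calc ‖(∑ i, ((fderiv ℝ f (T i w)).comp (T i) - (fderiv ℝ f (T i w')).comp (T i))) v‖
      ≤ ∑ i, L * ‖T i (w - w')‖ * ‖T i v‖ := by
        rw [sum_apply]
        refine (norm_sum_le _ _).trans (Finset.sum_le_sum fun i _ => ?_)
        rw [← ContinuousLinearMap.sub_comp, map_sub]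
        exact ((fderiv ℝ f (T i w) - fderiv ℝ f (T i w')).le_opNorm (T i v)).trans
          (by gcongr; exact hlip _ _)
    _ = L * ∑ i, ‖T i (w - w')‖ * ‖T i v‖ := by simp only [Finset.mul_sum, mul_assoc]
    _ ≤ L * (√(∑ i, ‖T i (w - w')‖ ^ 2) * √(∑ i, ‖T i v‖ ^ 2)) := by
        gcongr; exact Real.sum_mul_le_sqrt_mul_sqrt _ _ _
    _ ≤ L * ((√K * ‖w - w'‖) * (√K * ‖v‖)) := by gcongr <;> apply hsqrt
    _ = L * K * ‖w - w'‖ * ‖v‖ := by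
        rw [mul_mul_mul_comm, Real.mul_self_sqrt hK]; ring

end SumComp

namespace ConfSpace

variable {dθ dx : ℕ}

noncomputable def toJoint (N : ℕ) (i : Fin N) : ConfSpace dθ dx N →L[ℝ] JointSpace dθ dx :=
  (WithLp.prodContinuousLinearEquiv 2 ℝ _ _).symm.toContinuousLinearMap ∘L
    ((ContinuousLinearMap.id ℝ _).prodMap (√N • PiLp.proj 2 _ i)) ∘L
    (WithLp.prodContinuousLinearEquiv 2 ℝ _ _).toContinuousLinearMap

theorem norm_toJoint_sq {N : ℕ} (i : Fin N) (v : ConfSpace dθ dx N) :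
    ‖toJoint N i v‖ ^ 2 = ‖v.fst‖ ^ 2 + N * ‖v.snd i‖ ^ 2 := by
  rw [WithLp.prod_norm_sq_eq_of_L2]
  change ‖v.fst‖ ^ 2 + ‖√N • v.snd i‖ ^ 2 = _
  rw [norm_smul, mul_pow, Real.norm_eq_abs, sq_abs, Real.sq_sqrt N.cast_nonneg]

theorem sum_norm_toJoint_sq (N : ℕ) (v : ConfSpace dθ dx N) :
    ∑ i, ‖toJoint N i v‖ ^ 2 = N * ‖v‖ ^ 2 := by
  simp only [norm_toJoint_sq]
  rw [Finset.sum_add_distrib, Finset.sum_const, Finset.card_univ, Fintype.card_fin,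
    nsmul_eq_mul, ← Finset.mul_sum, WithLp.prod_norm_sq_eq_of_L2,
    PiLp.norm_sq_eq_of_L2 _ v.snd]
  ring

end ConfSpace

theorem barUN_eq_sum_toJoint {dθ dx : ℕ} (N : ℕ) (U : JointSpace dθ dx → ℝ) :
    barUN N U = fun w => (N : ℝ)⁻¹ * ∑ i, U (ConfSpace.toJoint N i w) := rfl

/-- **Gradient Lipschitzness of `barU_N` (Lemma A.5).**  If `U` is differentiable with
`L`-Lipschitz gradient on `ℝ^{dθ+dx}`, then `barU_N` has `L`-Lipschitz gradient on
`ℝ^{dθ + N dx}`, with the same constant, independently of `N`. -/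
theorem barUN_gradient_lipschitz {dθ dx : ℕ} (L : ℝ) (hL : 0 < L) (N : ℕ)
    (U : JointSpace dθ dx → ℝ) (hU : Differentiable ℝ U)
    (hlip : ∀ z z' : JointSpace dθ dx,
      ‖gradient U z - gradient U z'‖ ≤ L * ‖z - z'‖) :
    ∀ w w' : ConfSpace dθ dx N,
      ‖gradient (barUN N U) w - gradient (barUN N U) w'‖ ≤ L * ‖w - w'‖ := by
  intro w w'
  simp only [norm_gradient_sub_gradient] at hlip ⊢
  have hsum := norm_fderiv_sum_comp_sub_le (ConfSpace.toJoint N) hU hL.le N.cast_nonneg hlip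
    (fun v => (ConfSpace.sum_norm_toJoint_sq N v).le) w w'
  have hdiff : Differentiable ℝ fun w => ∑ i, U (ConfSpace.toJoint N i w) :=
    fun w => (hasFDerivAt_sum_comp _ hU w).differentiableAt
  rw [barUN_eq_sum_toJoint, fderiv_const_mul (hdiff w), fderiv_const_mul (hdiff w'),
    ← smul_sub, norm_smul, Real.norm_eq_abs, abs_inv, Nat.abs_cast]
  calc _ ≤ (N : ℝ)⁻¹ * (L * N * ‖w - w'‖) := by gcongr
    _ = ((N : ℝ)⁻¹ * N) * (L * ‖w - w'‖) := by ring
    _ ≤ L * ‖w - w'‖ := mul_le_of_le_one_left (by positivity) inv_mul_le_one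
end
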